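/- For all natural numbers L, M with 0 ≤ L ≤ M ≤ N, the rescaled features satisfy the telescoped bound |S_M − S_L| ≤ (M − L)/N; in particular, features morph from S_0 = 0 to the penultimate rescaled feature S_N by increments that accumulate at most linearly in depth. -/

import Mathlib

/-! The unnormalised features `Y_L = L · X_L` obey the undamped recursion
`Y_L = max 0 (Y_{L-1} + tanh f_L)` with `Y_0 = 0`. Since `Y ≥ 0`, clipping at `0` only moves
`Y_{L-1} + tanh f_L` towards `Y_{L-1}`, so every step of `Y` has size at most `|tanh f_L| < 1`;
summing the steps and dividing by `N` gives the bound on `S = Y / N`. -/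

lemma abs_max_zero_add_sub_le {a : ℝ} (ha : 0 ≤ a) (t : ℝ) : |max 0 (a + t) - a| ≤ |t| := by
  rcases le_total 0 (a + t) with h | h
  · simp [max_eq_right h]
  · rw [max_eq_left h, zero_sub, abs_neg, abs_of_nonneg ha]
    linarith [neg_le_abs t]

lemma abs_sub_le_mul_of_abs_succ_sub_le {Y : ℕ → ℝ} {c : ℝ} {n : ℕ}
    (hY : ∀ k < n, |Y (k + 1) - Y k| ≤ c) {L M : ℕ} (hLM : L ≤ M) (hM : M ≤ n) :
    |Y M - Y L| ≤ ((M : ℝ) - L) * c := by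
  induction M, hLM using Nat.le_induction with
  | base => simp
  | succ M hLM ih =>
    calc |Y (M + 1) - Y L| ≤ |Y (M + 1) - Y M| + |Y M - Y L| := abs_sub_le _ _ _
      _ ≤ c + ((M : ℝ) - L) * c := add_le_add (hY M hM) (ih (Nat.le_of_succ_le hM))
      _ = (((M + 1 : ℕ) : ℝ) - L) * c := by push_cast; ring

lemma natCast_succ_mul_max_zero_average (k : ℕ) (x t : ℝ) :
    ((k + 1 : ℕ) : ℝ) * max 0 ((1 - 1 / ((k + 1 : ℕ) : ℝ)) * x + (1 / ((k + 1 : ℕ) : ℝ)) * t) =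
      max 0 (k * x + t) := by
  have hk : (0 : ℝ) < ((k + 1 : ℕ) : ℝ) := by positivity
  rw [mul_max_of_nonneg _ _ hk.le, mul_zero]
  congr 1
  field_simp
  push_cast
  ring

theorem facnn_telescoped_bound_general
    (N : ℕ) (f : ℕ → ℝ) (X S : ℕ → ℝ)
    (hX : ∀ L, 1 ≤ L → L ≤ N →
      X L = max 0 ((1 - 1 / (L : ℝ)) * X (L - 1)
        + (1 / (L : ℝ)) * Real.tanh (f L)))
    (hS0 : S 0 = 0)
    (hS : ∀ L, 1 ≤ L → L ≤ N → S L = ((L : ℝ) / (N : ℝ)) * X L) :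
    ∀ L M, L ≤ M → M ≤ N →
      |S M - S L| ≤ ((M : ℝ) - (L : ℝ)) / (N : ℝ) := by
  set Y : ℕ → ℝ := fun k => k * X k with hY_def
  have hSY : ∀ k ≤ N, S k = Y k / N := by
    rintro (_ | k) hk
    · simp [hS0, hY_def]
    · rw [hS _ k.succ_pos hk]; ring
  have hY_succ : ∀ k < N, Y (k + 1) = max 0 (Y k + Real.tanh (f (k + 1))) := fun k hk => by
    simp only [hY_def, hX (k + 1) k.succ_pos hk, Nat.add_sub_cancel]
    exact natCast_succ_mul_max_zero_average k _ _
  have hY_nonneg : ∀ k ≤ N, 0 ≤ Y k := by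
    rintro (_ | k) hk
    · simp [hY_def]
    · rw [hY_succ k hk]; exact le_max_left _ _
  have hY_step : ∀ k < N, |Y (k + 1) - Y k| ≤ 1 := fun k hk => by
    rw [hY_succ k hk]
    exact (abs_max_zero_add_sub_le (hY_nonneg k hk.le) _).trans (Real.abs_tanh_lt_one _).le
  intro L M hLM hMN
  rw [hSY M hMN, hSY L (hLM.trans hMN), ← sub_div, abs_div, Nat.abs_cast]
  gcongr
  simpa using abs_sub_le_mul_of_abs_succ_sub_le hY_step hLM hMN

/-- telescoped bounded increment:
With the dampened skip connection `X_L = ReLU((1 − 1/L)·X_{L−1} + (1/L)·tanh(f_L))`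
and rescaled features `S_0 = 0`, `S_L = (L/N)·X_L`, for all `0 ≤ L ≤ M ≤ N` we have
`|S_M − S_L| ≤ (M − L)/N`. -/
theorem facnn_telescoped_bound
    (N : ℕ) (hN : 1 ≤ N) (f : ℕ → ℝ) (X S : ℕ → ℝ)
    (hX : ∀ L, 1 ≤ L → L ≤ N →
      X L = max 0 ((1 - 1 / (L : ℝ)) * X (L - 1)
        + (1 / (L : ℝ)) * Real.tanh (f L)))
    (hS0 : S 0 = 0)
    (hS : ∀ L, 1 ≤ L → L ≤ N → S L = ((L : ℝ) / (N : ℝ)) * X L) :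
    ∀ L M, L ≤ M → M ≤ N →
      |S M - S L| ≤ ((M : ℝ) - (L : ℝ)) / (N : ℝ) :=
  facnn_telescoped_bound_general N f X S hX hS0 hS
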